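/- arXiv:2411.05366 — 3 statements merged into one kernel-verified Lean document; each statement's English description precedes it below -/
import Mathlib

section
/- Let p be a prime, let f ∈ ℤ[x,y] be a polynomial with integer coefficients and nonzero constant term, and let x, y be integers with p ∣ f(x,y) and p ∤ f_x(x,y). Then the number of pairs (k,l) ∈ {0,1,…,p−1}² such that p ∣ f(x+kp, y+lp) and p² ∤ f(x+kp, y+lp) (i.e. the p-adic valuation of f(x+kp, y+lp) is exactly 1) equals p(p−1). -/
/-!
A first-order Taylor expansion gives
`f(x + kp, y + lp) ≡ p (c + k f_x(x,y) + l f_y(x,y)) (mod p²)`, where `f(x,y) = p c`.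
So `f(x + kp, y + lp)` has valuation exactly one iff `p ∤ c + k f_x + l f_y`. Since
`p ∤ f_x(x,y)`, for each `l` this linear condition fails for exactly one `k` modulo `p`,
leaving `p² - p` good pairs.
-/

open MvPolynomial Finset

theorem MvPolynomial.sq_dvd_eval_add_mul_sub {R σ : Type*} [CommRing R] [Fintype σ]
    (f : MvPolynomial σ R) (v w : σ → R) (p : R) :
    p ^ 2 ∣ eval (fun i => v i + w i * p) f
      - (eval v f + p * ∑ i, w i * eval v (pderiv i f)) := by
  classical
  induction f using MvPolynomial.induction_on with
  | C r => simp
  | add q r hq hr =>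
    convert dvd_add hq hr using 1
    simp only [map_add, mul_add, sum_add_distrib]
    ring
  | mul_X q j hq =>
    obtain ⟨t, ht⟩ := hq
    set S := ∑ i, w i * eval v (pderiv i q)
    have hS : ∑ i, w i * eval v (pderiv i (q * X j)) = S * v j + w j * eval v q := by
      simp [S, pderiv_X, Pi.single_apply, mul_add, sum_add_distrib, mul_sum, apply_ite,
        mul_comm, mul_left_comm, add_comm]
    refine ⟨t * (v j + w j * p) + S * w j, ?_⟩
    rw [hS]
    simp only [eval_mul, eval_X]
    linear_combination (v j + w j * p) * ht

theorem dvd_and_not_sq_dvd_iff {R : Type*} [CommRing R] [IsDomain R] {p a b : R}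
    (hp : p ≠ 0) (h : p ^ 2 ∣ a - p * b) : (p ∣ a ∧ ¬ p ^ 2 ∣ a) ↔ ¬ p ∣ b := by
  have hsq : p ^ 2 ∣ a ↔ p ∣ b := by
    have := dvd_add_right h (c := p * b)
    rwa [sub_add_cancel, pow_two, mul_dvd_mul_iff_left hp, ← pow_two] at this
  have hp_dvd : p ∣ a := by
    have := dvd_add ((dvd_pow_self p two_ne_zero).trans h) (dvd_mul_right p b)
    rwa [sub_add_cancel] at this
  simp [hsq, hp_dvd]

theorem card_filter_range_dvd_add_mul {p : ℕ} (hp : p.Prime) {a : ℤ} (ha : ¬ (p : ℤ) ∣ a)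
    (c : ℤ) : #{k ∈ range p | (p : ℤ) ∣ c + ↑k * a} = 1 := by
  have := Fact.mk hp
  have ha' : (a : ZMod p) ≠ 0 := by rwa [Ne, ZMod.intCast_zmod_eq_zero_iff_dvd]
  rw [card_eq_one]
  refine ⟨(-c / a : ZMod p).val, ?_⟩
  ext k
  simp only [mem_filter, mem_range, mem_singleton]
  rw [← ZMod.intCast_zmod_eq_zero_iff_dvd]
  push_cast
  constructor
  · rintro ⟨hk, h⟩
    rw [← ZMod.val_cast_of_lt hk]
    congr 1
    field_simp
    linear_combination h
  · rintro rfl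
    refine ⟨ZMod.val_lt _, ?_⟩
    simp only [ZMod.natCast_val, ZMod.cast_id', id_eq]
    field_simp
    ring

theorem card_filter_range_product_not_dvd {p : ℕ} (hp : p.Prime) {a : ℤ}
    (ha : ¬ (p : ℤ) ∣ a) (b c : ℤ) :
    #{kl ∈ range p ×ˢ range p | ¬ (p : ℤ) ∣ c + kl.1 * a + kl.2 * b} = p * (p - 1) := by
  have hdvd : #{kl ∈ range p ×ˢ range p | (p : ℤ) ∣ c + kl.1 * a + kl.2 * b} = p := by
    rw [card_filter, sum_product_right]
    simp_rw [← card_filter, add_right_comm c, card_filter_range_dvd_add_mul hp ha]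
    simp
  rw [filter_not, card_sdiff_of_subset (filter_subset _ _), hdvd, card_product, card_range,
    Nat.mul_sub_one]

theorem stmt_0_general (p : ℕ) (hp : p.Prime) (f : MvPolynomial (Fin 2) ℤ)
    (x y : ℤ)
    (hdvd : (p : ℤ) ∣ MvPolynomial.eval ![x, y] f)
    (hfx : ¬ (p : ℤ) ∣ MvPolynomial.eval ![x, y] (MvPolynomial.pderiv 0 f)) :
    ((Finset.range p ×ˢ Finset.range p).filter (fun kl : ℕ × ℕ =>
        (p : ℤ) ∣ MvPolynomial.eval ![x + (kl.1 : ℤ) * p, y + (kl.2 : ℤ) * p] f ∧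
        ¬ ((p : ℤ) ^ 2 ∣ MvPolynomial.eval ![x + (kl.1 : ℤ) * p, y + (kl.2 : ℤ) * p] f))).card
      = p * (p - 1) := by
  obtain ⟨c, hc⟩ := hdvd
  have hp0 : (p : ℤ) ≠ 0 := by exact_mod_cast hp.ne_zero
  rw [← card_filter_range_product_not_dvd hp hfx (eval ![x, y] (pderiv 1 f)) c]
  refine congrArg card (filter_congr fun kl _ => dvd_and_not_sq_dvd_iff hp0 ?_)
  have hpt : ![x + (kl.1 : ℤ) * p, y + (kl.2 : ℤ) * p]
      = fun i => ![x, y] i + ![(kl.1 : ℤ), kl.2] i * p := by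
    ext i; fin_cases i <;> rfl
  convert f.sq_dvd_eval_add_mul_sub ![x, y] ![(kl.1 : ℤ), kl.2] (p : ℤ) using 1
  rw [hpt, hc, Fin.sum_univ_two]
  simp only [Matrix.cons_val_zero, Matrix.cons_val_one]
  ring

theorem stmt_0 (p : ℕ) (hp : p.Prime) (f : MvPolynomial (Fin 2) ℤ)
    (hconst : MvPolynomial.coeff 0 f ≠ 0) (x y : ℤ)
    (hdvd : (p : ℤ) ∣ MvPolynomial.eval ![x, y] f)
    (hfx : ¬ (p : ℤ) ∣ MvPolynomial.eval ![x, y] (MvPolynomial.pderiv 0 f)) :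
    ((Finset.range p ×ˢ Finset.range p).filter (fun kl : ℕ × ℕ =>
        (p : ℤ) ∣ MvPolynomial.eval ![x + (kl.1 : ℤ) * p, y + (kl.2 : ℤ) * p] f ∧
        ¬ ((p : ℤ) ^ 2 ∣ MvPolynomial.eval ![x + (kl.1 : ℤ) * p, y + (kl.2 : ℤ) * p] f))).card
      = p * (p - 1) :=
  stmt_0_general p hp f x y hdvd hfx
end

section
/- Let p be a prime, f ∈ ℤ[x,y] a polynomial with integer coefficients and nonzero constant term, and (r₁,s₁), (r₂,s₂) integer points with p ∣ f(r₁,s₁) and p ∣ f(r₂,s₂). Assume f_x(r₁,s₁)·f_y(r₂,s₂) − f_y(r₁,s₁)·f_x(r₂,s₂) ≢ 0 (mod p). Then the number of pairs (k,l) ∈ {0,1,…,p−1}² such that p² ∣ f(r₁+kp, s₁+lp) while p ∣ f(r₂+kp, s₂+lp) and p² ∤ f(r₂+kp, s₂+lp) equals p−1. -/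
/-!
Write `f(rᵢ, sᵢ) = p cᵢ`. A first-order Taylor expansion gives
`f(rᵢ + kp, sᵢ + lp) ≡ p (cᵢ + k f_x(rᵢ, sᵢ) + l f_y(rᵢ, sᵢ)) (mod p²)`, so `p` always divides
the shifted value and `p²` divides it iff the linear form `Lᵢ(k, l) = k f_x + l f_y` takes the
value `-cᵢ` in `𝔽_p`. The determinant condition makes `(L₁, L₂)` a bijection of `𝔽_p²`, so the
pairs counted correspond to `{-c₁} × (𝔽_p ∖ {-c₂})`, a set of `p - 1` points.
-/

open MvPolynomial Finset

namespace MvPolynomial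

variable {R σ : Type*} [CommRing R] [Fintype σ]

theorem sq_dvd_eval_add_smul_sub (f : MvPolynomial σ R) (x h : σ → R) (p : R) :
    p ^ 2 ∣ eval (x + p • h) f - eval x f - p * ∑ i, h i * eval x (pderiv i f) := by
  classical
  induction f using MvPolynomial.induction_on with
  | C a => simp
  | add f g hf hg =>
    convert dvd_add hf hg using 1
    simp only [map_add, mul_add, sum_add_distrib]
    ring
  | mul_X f j hf =>
    obtain ⟨m, hm⟩ := hf
    refine ⟨x j * m + h j * (∑ i, h i * eval x (pderiv i f) + p * m), ?_⟩
    have hderiv : ∑ i, h i * eval x (pderiv i (f * X j)) =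
        x j * ∑ i, h i * eval x (pderiv i f) + h j * eval x f := by
      simp [Pi.single_apply, mul_add, sum_add_distrib, mul_sum, apply_ite, mul_left_comm, add_comm]
    simp only [hderiv, map_mul, eval_X, Pi.add_apply, Pi.smul_apply, smul_eq_mul]
    linear_combination (x j + p * h j) * hm

theorem dvd_eval_add_smul {f : MvPolynomial σ R} {x : σ → R} {p : R} (hx : p ∣ eval x f)
    (h : σ → R) : p ∣ eval (x + p • h) f := by
  have hsq := (dvd_pow_self p two_ne_zero).trans (sq_dvd_eval_add_smul_sub f x h p)
  rw [sub_sub, dvd_sub_left (dvd_add hx (dvd_mul_right _ _))] at hsq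
  exact hsq

theorem sq_dvd_eval_add_smul_iff [IsDomain R] {f : MvPolynomial σ R} {x : σ → R} {p c : R}
    (hp : p ≠ 0) (hc : eval x f = p * c) (h : σ → R) :
    p ^ 2 ∣ eval (x + p • h) f ↔ p ∣ c + ∑ i, h i * eval x (pderiv i f) := by
  obtain ⟨m, hm⟩ := sq_dvd_eval_add_smul_sub f x h p
  rw [show eval (x + p • h) f = p * (c + ∑ i, h i * eval x (pderiv i f)) + p ^ 2 * m by
      linear_combination hm + hc,
    dvd_add_left (dvd_mul_right _ _), sq, mul_dvd_mul_iff_left hp]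

end MvPolynomial

theorem card_filter_linear_eq_and_ne {F : Type*} [Field F] [Fintype F] [DecidableEq F]
    {a₁ b₁ a₂ b₂ : F} (hdet : a₁ * b₂ - b₁ * a₂ ≠ 0) (α β : F) :
    #{uv : F × F | a₁ * uv.1 + b₁ * uv.2 = α ∧ a₂ * uv.1 + b₂ * uv.2 ≠ β} =
      Fintype.card F - 1 := by
  set d := a₁ * b₂ - b₁ * a₂
  have hd : d * d⁻¹ = 1 := mul_inv_cancel₀ hdet
  let e : F × F → F × F := fun uv => (a₁ * uv.1 + b₁ * uv.2, a₂ * uv.1 + b₂ * uv.2)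
  -- Cramer's rule
  let e' : F × F → F × F := fun xy =>
    (d⁻¹ * (b₂ * xy.1 - b₁ * xy.2), d⁻¹ * (a₁ * xy.2 - a₂ * xy.1))
  have he'e : ∀ uv, e' (e uv) = uv := by
    rintro ⟨u, v⟩
    ext
    · linear_combination u * hd
    · linear_combination v * hd
  have hee' : ∀ xy, e (e' xy) = xy := by
    rintro ⟨x, y⟩
    ext
    · linear_combination x * hd
    · linear_combination y * hd
  calc _ = #{uv | e uv ∈ ({α} ×ˢ ({β}ᶜ : Finset F))} := by
        simp only [e, mem_product, mem_singleton, mem_compl]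
    _ = #({α} ×ˢ ({β}ᶜ : Finset F)) :=
      card_nbij' e e' (fun uv huv => by simpa using huv) (fun xy hxy => by simpa [hee'] using hxy)
        (fun uv _ => he'e uv) (fun xy _ => hee' xy)
    _ = Fintype.card F - 1 := by simp [card_compl]

theorem ZMod.card_filter_range_prod_range {n : ℕ} [NeZero n] (P : ZMod n × ZMod n → Prop)
    [DecidablePred P] :
    #{kl ∈ range n ×ˢ range n | P (kl.1, kl.2)} = #{uv : ZMod n × ZMod n | P uv} := by
  refine card_nbij' (fun kl => ((kl.1 : ZMod n), (kl.2 : ZMod n))) (fun uv => (uv.1.val, uv.2.val))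
    ?_ ?_ ?_ ?_ <;> rintro ⟨k, l⟩ <;> simp +contextual [ZMod.val_lt, Nat.mod_eq_of_lt]

theorem vecCons_add_mul (r s k l p : ℤ) : ![r + k * p, s + l * p] = ![r, s] + p • ![k, l] := by
  ext i; fin_cases i <;> simp [mul_comm]

theorem dvd_eval_vecCons_add_mul {f : MvPolynomial (Fin 2) ℤ} {p r s : ℤ}
    (h : p ∣ eval ![r, s] f) (k l : ℤ) : p ∣ eval ![r + k * p, s + l * p] f := by
  rw [vecCons_add_mul]
  exact dvd_eval_add_smul h _

theorem sq_dvd_eval_vecCons_add_mul_iff {f : MvPolynomial (Fin 2) ℤ} {p : ℕ} {r s c : ℤ}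
    (hp : p ≠ 0) (hc : eval ![r, s] f = p * c) (k l : ℤ) :
    (p : ℤ) ^ 2 ∣ eval ![r + k * p, s + l * p] f ↔
      (eval ![r, s] (pderiv 0 f) : ZMod p) * k + (eval ![r, s] (pderiv 1 f) : ZMod p) * l =
        -c := by
  rw [vecCons_add_mul, sq_dvd_eval_add_smul_iff (by exact_mod_cast hp) hc,
    ← ZMod.intCast_zmod_eq_zero_iff_dvd, eq_neg_iff_add_eq_zero]
  push_cast
  simp only [Fin.sum_univ_two, Matrix.cons_val_zero, Matrix.cons_val_one]
  constructor <;> intro h <;> linear_combination h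

theorem stmt_4_general (p : ℕ) (hp : p.Prime) (f : MvPolynomial (Fin 2) ℤ)
    (r₁ s₁ r₂ s₂ : ℤ)
    (h₁ : (p : ℤ) ∣ MvPolynomial.eval ![r₁, s₁] f)
    (h₂ : (p : ℤ) ∣ MvPolynomial.eval ![r₂, s₂] f)
    (hdet : ¬ (p : ℤ) ∣
      (MvPolynomial.eval ![r₁, s₁] (MvPolynomial.pderiv 0 f) *
        MvPolynomial.eval ![r₂, s₂] (MvPolynomial.pderiv 1 f) -
       MvPolynomial.eval ![r₁, s₁] (MvPolynomial.pderiv 1 f) *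
        MvPolynomial.eval ![r₂, s₂] (MvPolynomial.pderiv 0 f))) :
    ((Finset.range p ×ˢ Finset.range p).filter (fun kl : ℕ × ℕ =>
        ((p : ℤ) ^ 2 ∣ MvPolynomial.eval ![r₁ + (kl.1 : ℤ) * p, s₁ + (kl.2 : ℤ) * p] f) ∧
        ((p : ℤ) ∣ MvPolynomial.eval ![r₂ + (kl.1 : ℤ) * p, s₂ + (kl.2 : ℤ) * p] f ∧
          ¬ ((p : ℤ) ^ 2 ∣ MvPolynomial.eval ![r₂ + (kl.1 : ℤ) * p, s₂ + (kl.2 : ℤ) * p] f)))).card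
      = p - 1 := by
  have := Fact.mk hp
  obtain ⟨c₁, hc₁⟩ := h₁
  obtain ⟨c₂, hc₂⟩ := h₂
  have hdet' : ((eval ![r₁, s₁] (pderiv 0 f) : ZMod p)) * (eval ![r₂, s₂] (pderiv 1 f) : ZMod p) -
      (eval ![r₁, s₁] (pderiv 1 f) : ZMod p) * (eval ![r₂, s₂] (pderiv 0 f) : ZMod p) ≠ 0 := by
    exact_mod_cast mt (ZMod.intCast_zmod_eq_zero_iff_dvd _ p).mp hdet
  simp only [sq_dvd_eval_vecCons_add_mul_iff hp.ne_zero hc₁,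
    sq_dvd_eval_vecCons_add_mul_iff hp.ne_zero hc₂, dvd_eval_vecCons_add_mul ⟨c₂, hc₂⟩, true_and,
    Int.cast_natCast]
  refine (ZMod.card_filter_range_prod_range
    (fun uv => _ * uv.1 + _ * uv.2 = _ ∧ _ * uv.1 + _ * uv.2 ≠ _)).trans ?_
  rw [card_filter_linear_eq_and_ne hdet', ZMod.card]

theorem stmt_4 (p : ℕ) (hp : p.Prime) (f : MvPolynomial (Fin 2) ℤ)
    (hconst : MvPolynomial.coeff 0 f ≠ 0) (r₁ s₁ r₂ s₂ : ℤ)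
    (h₁ : (p : ℤ) ∣ MvPolynomial.eval ![r₁, s₁] f)
    (h₂ : (p : ℤ) ∣ MvPolynomial.eval ![r₂, s₂] f)
    (hdet : ¬ (p : ℤ) ∣
      (MvPolynomial.eval ![r₁, s₁] (MvPolynomial.pderiv 0 f) *
        MvPolynomial.eval ![r₂, s₂] (MvPolynomial.pderiv 1 f) -
       MvPolynomial.eval ![r₁, s₁] (MvPolynomial.pderiv 1 f) *
        MvPolynomial.eval ![r₂, s₂] (MvPolynomial.pderiv 0 f))) :
    ((Finset.range p ×ˢ Finset.range p).filter (fun kl : ℕ × ℕ =>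
        ((p : ℤ) ^ 2 ∣ MvPolynomial.eval ![r₁ + (kl.1 : ℤ) * p, s₁ + (kl.2 : ℤ) * p] f) ∧
        ((p : ℤ) ∣ MvPolynomial.eval ![r₂ + (kl.1 : ℤ) * p, s₂ + (kl.2 : ℤ) * p] f ∧
          ¬ ((p : ℤ) ^ 2 ∣ MvPolynomial.eval ![r₂ + (kl.1 : ℤ) * p, s₂ + (kl.2 : ℤ) * p] f)))).card
      = p - 1 :=
  stmt_4_general p hp f r₁ s₁ r₂ s₂ h₁ h₂ hdet
end

section
/- Let p be a prime, f ∈ ℤ[x,y] a polynomial with integer coefficients and nonzero constant term, and (r₁,s₁), (r₂,s₂) integer points with p ∣ f(r₁,s₁), p ∣ f(r₂,s₂), and f_x(r₁,s₁)·f_y(r₂,s₂) − f_y(r₁,s₁)·f_x(r₂,s₂) ≢ 0 (mod p). Equip Ω = {0,1,…,p−1}² with the uniform probability measure, and for i = 1,2 define the random variable Y_i : Ω → {0,1} by Y_i(k,l) = 1 if p² ∣ f(r_i+kp, s_i+lp) and Y_i(k,l) = 0 otherwise. Then Y₁ and Y₂ are independent random variables. -/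
/-! Expanding `f` to first order at `(r, s)` gives
`f (r + k p, s + l p) ≡ f (r, s) + p (k f_x (r, s) + l f_y (r, s)) [ZMOD p²]`.
Writing `f (rᵢ, sᵢ) = p mᵢ`, the event `Yᵢ = 1` is therefore the vanishing mod `p` of the affine
form `mᵢ + k f_x (rᵢ, sᵢ) + l f_y (rᵢ, sᵢ)` in `(k, l)`. The determinant condition makes the pair of
these two forms a bijection from `{0, …, p - 1}²` onto `𝔽_p²`; it carries the uniform measure to the uniform measure, under
which the two coordinates are independent. -/

open scoped ENNReal

namespace MvPolynomial

variable {R σ : Type*} [CommRing R] [Fintype σ]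

theorem sq_dvd_eval_add_mul_sub_taylor (f : MvPolynomial σ R) (x v : σ → R) (p : R) :
    p ^ 2 ∣ eval (fun i => x i + v i * p) f -
      (eval x f + p * ∑ i, v i * eval x (pderiv i f)) := by
  classical
  induction f using MvPolynomial.induction_on with
  | C a => simp
  | add f g hf hg =>
    convert dvd_add hf hg using 1
    simp only [map_add, mul_add, Finset.sum_add_distrib]
    ring
  | mul_X f j hf =>
    have hsum : ∑ i, v i * eval x (pderiv i (f * X j)) =
        x j * ∑ i, v i * eval x (pderiv i f) + v j * eval x f := by
      simp only [Derivation.leibniz, pderiv_X, smul_eq_mul, map_add, map_mul, eval_X, mul_add,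
        Finset.sum_add_distrib, Finset.mul_sum, Pi.single_apply, mul_ite, mul_one, mul_zero,
        apply_ite (eval x), map_zero, Finset.sum_ite_eq, Finset.mem_univ, if_true,
        mul_left_comm (x j), add_comm]
    rw [hsum, eval_mul, eval_X, eval_mul, eval_X]
    convert dvd_add (hf.mul_left (x j + v j * p))
      (dvd_mul_right (p ^ 2) (v j * ∑ i, v i * eval x (pderiv i f))) using 1
    ring

theorem sq_dvd_eval_add_mul_iff [IsDomain R] {p : R} (hp : p ≠ 0) (f : MvPolynomial σ R)
    (x v : σ → R) {m : R} (hm : eval x f = p * m) :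
    p ^ 2 ∣ eval (fun i => x i + v i * p) f ↔ p ∣ m + ∑ i, v i * eval x (pderiv i f) := by
  obtain ⟨t, ht⟩ := sq_dvd_eval_add_mul_sub_taylor f x v p
  have hexpand : eval (fun i => x i + v i * p) f =
      p ^ 2 * t + p * (m + ∑ i, v i * eval x (pderiv i f)) := by
    linear_combination ht + hm
  rw [hexpand, dvd_add_right (dvd_mul_right _ _), pow_two, mul_dvd_mul_iff_left hp]

end MvPolynomial

open MvPolynomial in
theorem sq_dvd_eval_add_mul_iff_zmod {p : ℕ} (hp : p ≠ 0) (f : MvPolynomial (Fin 2) ℤ) {r s m : ℤ}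
    (hm : eval ![r, s] f = p * m) (k l : ℤ) :
    (p : ℤ) ^ 2 ∣ eval ![r + k * p, s + l * p] f ↔
      (m : ZMod p) + k * (eval ![r, s] (pderiv 0 f) : ℤ) +
        l * (eval ![r, s] (pderiv 1 f) : ℤ) = 0 := by
  have hpoint : ![r + k * p, s + l * p] = fun i => ![r, s] i + ![k, l] i * p := by
    ext i; fin_cases i <;> rfl
  rw [hpoint, sq_dvd_eval_add_mul_iff (by exact_mod_cast hp) f _ _ hm,
    ← ZMod.intCast_zmod_eq_zero_iff_dvd]
  simp [Fin.sum_univ_two, add_assoc]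

theorem injective_affine_of_det_ne_zero {R : Type*} [CommRing R] [IsDomain R] {a b c d : R}
    (h : a * d - b * c ≠ 0) (u v : R) :
    Function.Injective fun z : R × R => (u + z.1 * a + z.2 * b, v + z.1 * c + z.2 * d) := by
  rintro ⟨x₁, x₂⟩ ⟨y₁, y₂⟩ hxy
  obtain ⟨h₁, h₂⟩ := Prod.ext_iff.mp hxy
  simp only at h₁ h₂
  have e₁ : (a * d - b * c) * (x₁ - y₁) = 0 := by linear_combination d * h₁ - b * h₂
  have e₂ : (a * d - b * c) * (x₂ - y₂) = 0 := by linear_combination a * h₂ - c * h₁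
  simp only [mul_eq_zero, h, false_or, sub_eq_zero] at e₁ e₂
  rw [e₁, e₂]

theorem ZMod.natCast_finVal_injective (p : ℕ) [NeZero p] :
    Function.Injective fun k : Fin p => ((k : ℕ) : ZMod p) := by
  intro k k' h
  ext
  simpa [ZMod.val_natCast_of_lt k.isLt, ZMod.val_natCast_of_lt k'.isLt] using congrArg ZMod.val h

theorem ZMod.bijective_affine_fin {p : ℕ} [Fact p.Prime] {a b c d : ZMod p}
    (h : a * d - b * c ≠ 0) (u v : ZMod p) :
    Function.Bijective fun kl : Fin p × Fin p =>
      (u + (kl.1 : ℕ) * a + (kl.2 : ℕ) * b, v + (kl.1 : ℕ) * c + (kl.2 : ℕ) * d) := by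
  have hinj := (injective_affine_of_det_ne_zero h u v).comp
    ((ZMod.natCast_finVal_injective p).prodMap (ZMod.natCast_finVal_injective p))
  exact (Fintype.bijective_iff_injective_and_card _).mpr ⟨hinj, by simp [ZMod.card]⟩

open MeasureTheory ProbabilityTheory in
theorem indepFun_fst_snd_of_bijective {Ω α β : Type*} [Fintype Ω] [MeasurableSpace Ω]
    [MeasurableSingletonClass Ω] [Fintype α] [Fintype β] [MeasurableSpace α] [MeasurableSpace β]
    {ψ : Ω → α × β} (hψ : Function.Bijective ψ) :
    IndepFun (fun ω => (ψ ω).1) (fun ω => (ψ ω).2)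
      ((Fintype.card Ω : ℝ≥0∞)⁻¹ • Measure.count) := by
  rw [indepFun_iff_measure_inter_preimage_eq_mul]
  intro s t _ _
  cases isEmpty_or_nonempty Ω
  · simp [Set.eq_empty_of_isEmpty]
  have hcount (u : Set (α × β)) : Measure.count (ψ ⁻¹' u) = u.ncard := by
    rw [Measure.count_apply .of_discrete,
      Set.encard_preimage_of_injective_subset_range hψ.1 (by simp [hψ.2.range_eq]),
      ← u.toFinite.cast_ncard_eq]
    rfl
  have hs : (fun ω => (ψ ω).1) ⁻¹' s = ψ ⁻¹' (s ×ˢ Set.univ) := by ext; simp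
  have ht : (fun ω => (ψ ω).2) ⁻¹' t = ψ ⁻¹' (Set.univ ×ˢ t) := by ext; simp
  have hst : (fun ω => (ψ ω).1) ⁻¹' s ∩ (fun ω => (ψ ω).2) ⁻¹' t = ψ ⁻¹' (s ×ˢ t) := by
    ext; simp
  have hcard : (Fintype.card Ω : ℝ≥0∞) = Fintype.card α * Fintype.card β := by
    rw [Fintype.card_of_bijective hψ, Fintype.card_prod, Nat.cast_mul]
  have hinv : (Fintype.card Ω : ℝ≥0∞)⁻¹ * Fintype.card Ω = 1 :=
    ENNReal.inv_mul_cancel (by simp) (by simp)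
  rw [hst, hs, ht]
  simp only [Measure.smul_apply, smul_eq_mul, hcount, Set.ncard_prod, Set.ncard_univ,
    Nat.card_eq_fintype_card, Nat.cast_mul]
  rw [hcard] at hinv ⊢
  set a : ℝ≥0∞ := (Fintype.card α : ℝ≥0∞)
  set b : ℝ≥0∞ := (Fintype.card β : ℝ≥0∞)
  calc (a * b)⁻¹ * (s.ncard * t.ncard)
      = (a * b)⁻¹ * (s.ncard * t.ncard) * ((a * b)⁻¹ * (a * b)) := by rw [hinv, mul_one]
    _ = _ := by ring

theorem stmt_9_general (p : ℕ) (hp : p.Prime) (f : MvPolynomial (Fin 2) ℤ)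
    (r₁ s₁ r₂ s₂ : ℤ)
    (h₁ : (p : ℤ) ∣ MvPolynomial.eval ![r₁, s₁] f)
    (h₂ : (p : ℤ) ∣ MvPolynomial.eval ![r₂, s₂] f)
    (hdet : ¬ (p : ℤ) ∣
      (MvPolynomial.eval ![r₁, s₁] (MvPolynomial.pderiv 0 f) *
        MvPolynomial.eval ![r₂, s₂] (MvPolynomial.pderiv 1 f) -
       MvPolynomial.eval ![r₁, s₁] (MvPolynomial.pderiv 1 f) *
        MvPolynomial.eval ![r₂, s₂] (MvPolynomial.pderiv 0 f))) :
    ProbabilityTheory.IndepFun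
      (fun kl : Fin p × Fin p =>
        if (p : ℤ) ^ 2 ∣ MvPolynomial.eval ![r₁ + ((kl.1 : ℕ) : ℤ) * p, s₁ + ((kl.2 : ℕ) : ℤ) * p] f
        then (1 : ℝ) else 0)
      (fun kl : Fin p × Fin p =>
        if (p : ℤ) ^ 2 ∣ MvPolynomial.eval ![r₂ + ((kl.1 : ℕ) : ℤ) * p, s₂ + ((kl.2 : ℕ) : ℤ) * p] f
        then (1 : ℝ) else 0)
      (((p : ℝ≥0∞) ^ 2)⁻¹ • MeasureTheory.Measure.count) := by
  have : Fact p.Prime := ⟨hp⟩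
  obtain ⟨m₁, hm₁⟩ := h₁
  obtain ⟨m₂, hm₂⟩ := h₂
  have hdet_zmod := mt (ZMod.intCast_zmod_eq_zero_iff_dvd _ p).mp hdet
  push_cast at hdet_zmod
  have hind := indepFun_fst_snd_of_bijective (ZMod.bijective_affine_fin hdet_zmod (m₁ : ZMod p) m₂)
  let isZero : ZMod p → ℝ := fun z => if z = 0 then 1 else 0
  convert hind.comp (measurable_of_finite isZero) (measurable_of_finite isZero) using 1
  · ext kl; simp [isZero, sq_dvd_eval_add_mul_iff_zmod hp.ne_zero f hm₁]
  · ext kl; simp [isZero, sq_dvd_eval_add_mul_iff_zmod hp.ne_zero f hm₂]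
  · simp [sq]

theorem stmt_9 (p : ℕ) (hp : p.Prime) (f : MvPolynomial (Fin 2) ℤ)
    (hconst : MvPolynomial.coeff 0 f ≠ 0) (r₁ s₁ r₂ s₂ : ℤ)
    (h₁ : (p : ℤ) ∣ MvPolynomial.eval ![r₁, s₁] f)
    (h₂ : (p : ℤ) ∣ MvPolynomial.eval ![r₂, s₂] f)
    (hdet : ¬ (p : ℤ) ∣
      (MvPolynomial.eval ![r₁, s₁] (MvPolynomial.pderiv 0 f) *
        MvPolynomial.eval ![r₂, s₂] (MvPolynomial.pderiv 1 f) -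
       MvPolynomial.eval ![r₁, s₁] (MvPolynomial.pderiv 1 f) *
        MvPolynomial.eval ![r₂, s₂] (MvPolynomial.pderiv 0 f))) :
    ProbabilityTheory.IndepFun
      (fun kl : Fin p × Fin p =>
        if (p : ℤ) ^ 2 ∣ MvPolynomial.eval ![r₁ + ((kl.1 : ℕ) : ℤ) * p, s₁ + ((kl.2 : ℕ) : ℤ) * p] f
        then (1 : ℝ) else 0)
      (fun kl : Fin p × Fin p =>
        if (p : ℤ) ^ 2 ∣ MvPolynomial.eval ![r₂ + ((kl.1 : ℕ) : ℤ) * p, s₂ + ((kl.2 : ℕ) : ℤ) * p] f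
        then (1 : ℝ) else 0)
      (((p : ℝ≥0∞) ^ 2)⁻¹ • MeasureTheory.Measure.count) :=
  stmt_9_general p hp f r₁ s₁ r₂ s₂ h₁ h₂ hdet
end
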